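/- Let μ be a probability measure on ℝ^d supported in the closed Euclidean ball B(0,R) for some R > 0. Then for every s > 0, the density μ*γ_s can be written as μ*γ_s = e^{−H} γ_s, where H : ℝ^d → ℝ is (R/s)-Lipschitz. -/

import Mathlib

/-! Expanding `‖z - x‖²` gives `γ_s (z - x) = γ_s z · exp (⟪z, x⟫ / s - ‖x‖² / (2s))`, so
`μ * γ_s = e^{-H} γ_s` with `H z = -log ∫ exp (⟪z, x⟫ / s - ‖x‖² / (2s)) dμ(x)`. For `‖x‖ ≤ R` the
exponent is `(R/s)`-Lipschitz in `z`, and the logarithm of an integral of exponentials of uniformly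
`K`-Lipschitz functions is again `K`-Lipschitz. -/

noncomputable section
open Real MeasureTheory

/-- Centered Gaussian density on `ℝ^d` with covariance `s • I_d`. -/
def gaussDensity {d : ℕ} (s : ℝ) (x : EuclideanSpace ℝ (Fin d)) : ℝ :=
  (2 * π * s) ^ (-(d : ℝ) / 2) * Real.exp (-‖x‖ ^ 2 / (2 * s))

/-- The heat flow `μ * γ_s` started from a measure `μ` on `ℝ^d`. -/
def heatConvMeas {d : ℕ} (μ : Measure (EuclideanSpace ℝ (Fin d))) (s : ℝ)
    (z : EuclideanSpace ℝ (Fin d)) : ℝ :=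
  ∫ x, gaussDensity s (z - x) ∂μ

open scoped NNReal

theorem lipschitzWith_log_integral_exp {X α : Type*} [PseudoMetricSpace X] [MeasurableSpace α]
    {μ : Measure α} [NeZero μ] {g : X → α → ℝ} {K : ℝ≥0}
    (hg : ∀ᵐ a ∂μ, LipschitzWith K fun z ↦ g z a)
    (hint : ∀ z, Integrable (fun a ↦ exp (g z a)) μ) :
    LipschitzWith K fun z ↦ log (∫ a, exp (g z a) ∂μ) := by
  refine LipschitzWith.of_le_add_mul K fun z z' ↦ ?_
  have hle : ∫ a, exp (g z a) ∂μ ≤ exp (K * dist z z') * ∫ a, exp (g z' a) ∂μ := by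
    rw [← integral_const_mul]
    refine integral_mono_ae (hint z) ((hint z').const_mul _) ?_
    filter_upwards [hg] with a ha
    rw [← exp_add, exp_le_exp]
    linarith [le_abs_self (g z a - g z' a), Real.dist_eq (g z a) (g z' a) ▸ ha.dist_le_mul z z']
  have h := log_le_log (integral_exp_pos (hint z)) hle
  rwa [log_mul (exp_pos _).ne' (integral_exp_pos (hint z')).ne', log_exp, add_comm] at h

-- `log (γ_s (z - x) / γ_s z)`
def gaussLogRatio {d : ℕ} (s : ℝ) (z x : EuclideanSpace ℝ (Fin d)) : ℝ :=
  inner ℝ z x / s - ‖x‖ ^ 2 / (2 * s)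

theorem gaussDensity_sub {d : ℕ} {s : ℝ} (hs : s ≠ 0) (z x : EuclideanSpace ℝ (Fin d)) :
    gaussDensity s (z - x) = gaussDensity s z * exp (gaussLogRatio s z x) := by
  rw [gaussDensity, gaussDensity, mul_assoc ((2 * π * s) ^ _), ← exp_add, norm_sub_sq_real,
    gaussLogRatio]
  congr 2
  field_simp
  ring

theorem heatConvMeas_eq_mul_integral {d : ℕ} (μ : Measure (EuclideanSpace ℝ (Fin d))) {s : ℝ}
    (hs : s ≠ 0) (z : EuclideanSpace ℝ (Fin d)) :
    heatConvMeas μ s z = gaussDensity s z * ∫ x, exp (gaussLogRatio s z x) ∂μ := by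
  simp_rw [heatConvMeas, gaussDensity_sub hs, integral_const_mul]

theorem lipschitzWith_gaussLogRatio_left {d : ℕ} {s R : ℝ} (hs : 0 < s)
    {x : EuclideanSpace ℝ (Fin d)} (hx : ‖x‖ ≤ R) :
    LipschitzWith (R / s).toNNReal fun z ↦ gaussLogRatio s z x := by
  refine LipschitzWith.of_dist_le_mul fun z z' ↦ ?_
  have hdiff : gaussLogRatio s z x - gaussLogRatio s z' x = inner ℝ (z - z') x / s := by
    rw [gaussLogRatio, gaussLogRatio, inner_sub_left]
    ring
  calc dist (gaussLogRatio s z x) (gaussLogRatio s z' x)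
      = |inner ℝ (z - z') x| / s := by rw [Real.dist_eq, hdiff, abs_div, abs_of_pos hs]
    _ ≤ ‖z - z'‖ * R / s := by
        gcongr
        exact (abs_real_inner_le_norm _ _).trans (by gcongr)
    _ = ‖z - z'‖ * (R / s) := by ring
    _ ≤ (R / s).toNNReal * dist z z' := by
        rw [dist_eq_norm, mul_comm]
        gcongr
        exact Real.le_coe_toNNReal _

theorem integrable_exp_gaussLogRatio {d : ℕ} {μ : Measure (EuclideanSpace ℝ (Fin d))}
    [IsFiniteMeasure μ] {s R : ℝ} (hs : 0 < s) (hμ : ∀ᵐ x ∂μ, ‖x‖ ≤ R)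
    (z : EuclideanSpace ℝ (Fin d)) :
    Integrable (fun x ↦ exp (gaussLogRatio s z x)) μ := by
  refine Integrable.of_bound (by unfold gaussLogRatio; fun_prop) (exp (‖z‖ * R / s)) ?_
  filter_upwards [hμ] with x hx
  rw [Real.norm_eq_abs, abs_of_pos (exp_pos _), exp_le_exp, gaussLogRatio]
  have : inner ℝ z x ≤ ‖z‖ * R := (real_inner_le_norm z x).trans (by gcongr)
  have : 0 ≤ ‖x‖ ^ 2 / (2 * s) := by positivity
  have : inner ℝ z x / s ≤ ‖z‖ * R / s := by gcongr
  linarith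

theorem bounded_support_heat_flow_is_log_lipschitz_perturbation_general
    (d : ℕ) (R : ℝ)
    (μ : Measure (EuclideanSpace ℝ (Fin d))) [IsProbabilityMeasure μ]
    (hsupp : μ (Metric.closedBall 0 R)ᶜ = 0)
    (s : ℝ) (hs : 0 < s) :
    ∃ H : EuclideanSpace ℝ (Fin d) → ℝ,
      LipschitzWith (R / s).toNNReal H ∧
      ∀ z, heatConvMeas μ s z = Real.exp (-(H z)) * gaussDensity s z := by
  have hμ : ∀ᵐ x ∂μ, ‖x‖ ≤ R := by
    filter_upwards [measure_eq_zero_iff_ae_notMem.1 hsupp] with x hx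
    simpa using hx
  have hint := integrable_exp_gaussLogRatio hs hμ
  refine ⟨fun z ↦ -log (∫ x, exp (gaussLogRatio s z x) ∂μ), ?_, fun z ↦ ?_⟩
  · refine (lipschitzWith_log_integral_exp ?_ hint).neg
    filter_upwards [hμ] with x hx using lipschitzWith_gaussLogRatio_left hs hx
  · rw [heatConvMeas_eq_mul_integral μ hs.ne', neg_neg, exp_log (integral_exp_pos (hint z)),
      mul_comm]

/-- **Example 4 (first part).** If `μ` is a probability measure supported in the closed ball
`B(0,R)`, then for every `s > 0` one can write `μ * γ_s = e^{-H} γ_s` with `H` an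
`(R/s)`-Lipschitz function. -/
theorem bounded_support_heat_flow_is_log_lipschitz_perturbation
    (d : ℕ) (R : ℝ) (hR : 0 < R)
    (μ : Measure (EuclideanSpace ℝ (Fin d))) [IsProbabilityMeasure μ]
    (hsupp : μ (Metric.closedBall 0 R)ᶜ = 0)
    (s : ℝ) (hs : 0 < s) :
    ∃ H : EuclideanSpace ℝ (Fin d) → ℝ,
      LipschitzWith (R / s).toNNReal H ∧
      ∀ z, heatConvMeas μ s z = Real.exp (-(H z)) * gaussDensity s z :=
  bounded_support_heat_flow_is_log_lipschitz_perturbation_general d R μ hsupp s hs
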